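/- Let a_1, a_2, a_3, a_4 ∈ ℝ² with a_2 lying in the interior of the convex hull of {a_1, a_3, a_4} (a concave quadrilateral a_1 a_2 a_3 a_4 with reflex corner at a_2). Then there is no point q with q ∉ convexHull{a_1, a_3, a_4}, with q strictly on the same side of the line through a_1 and a_2 as a_4, such that each of the four segments [q, a_1], [q, a_2], [q, a_3], [q, a_4] intersects each of the quadrilateral edges [a_1, a_2], [a_2, a_3], [a_3, a_4], [a_4, a_1] only in endpoints shared by the two segments. In other words, the edge a_1 a_2 of the concave quadrilateral cannot be good. -/

import Mathlib

/-- Twice the signed area of the triangle `p q r`; its sign tells on which side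
of the directed line through `p` and `q` the point `r` lies. Two points `x`, `y`
lie strictly on the same side of the line through `p` and `q` iff
`0 < det2 p q x * det2 p q y`. -/
def det2 (p q r : ℝ × ℝ) : ℝ :=
  (q.1 - p.1) * (r.2 - p.2) - (q.2 - p.2) * (r.1 - p.1)

/-!
The segment `[a₂, q]` runs from the interior of the triangle `T = conv {a₁, a₃, a₄}` to a point
outside it, so it leaves `T` through a boundary point `p ≠ a₂, q`, and that point lies on a side
of `T`. The sides `[a₃, a₄]` and `[a₄, a₁]` are edges of the quadrilateral, which `[q, a₂]` may
not cross. On the remaining side `[a₁, a₃]`, the point `p` would be strictly on the side of the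
line `a₁a₂` where `q`, hence `a₄`, lies, and then so would `a₃`; but the line through the vertex
`a₁` and the interior point `a₂` separates `a₃` from `a₄`.
-/

open Set

@[simp] lemma det2_self_left (a b : ℝ × ℝ) : det2 a b a = 0 := by
  simp only [det2]; ring

@[simp] lemma det2_self_right (a b : ℝ × ℝ) : det2 a b b = 0 := by
  simp only [det2]; ring

lemma det2_smul_add_smul (a b x y : ℝ × ℝ) {u v : ℝ} (huv : u + v = 1) :
    det2 a b (u • x + v • y) = u * det2 a b x + v * det2 a b y := by
  simp only [det2, Prod.fst_add, Prod.snd_add, Prod.smul_fst, Prod.smul_snd, smul_eq_mul]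
  linear_combination ((b.1 - a.1) * a.2 - (b.2 - a.2) * a.1) * huv

lemma det2_smul_add_smul_add_smul (a b x y z : ℝ × ℝ) {u v w : ℝ} (huvw : u + v + w = 1) :
    det2 a b (u • x + v • y + w • z) = u * det2 a b x + v * det2 a b y + w * det2 a b z := by
  simp only [det2, Prod.fst_add, Prod.snd_add, Prod.smul_fst, Prod.smul_snd, smul_eq_mul]
  linear_combination ((b.1 - a.1) * a.2 - (b.2 - a.2) * a.1) * huvw

lemma det2_mul_nonneg_of_mem_segment {a b c x y : ℝ × ℝ} (hc : det2 a b c = 0)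
    (hx : x ∈ segment ℝ c y) : 0 ≤ det2 a b x * det2 a b y := by
  obtain ⟨u, v, -, hv, huv, rfl⟩ := hx
  rw [det2_smul_add_smul a b c y huv, hc, mul_zero, zero_add, mul_assoc]
  exact mul_nonneg hv (mul_self_nonneg _)

lemma det2_mul_pos_of_mem_segment {a b c x y : ℝ × ℝ} (hc : det2 a b c = 0)
    (hy : det2 a b y ≠ 0) (hx : x ∈ segment ℝ c y) (hxc : x ≠ c) :
    0 < det2 a b x * det2 a b y := by
  obtain ⟨u, v, -, hv, huv, rfl⟩ := hx
  have hv : 0 < v := hv.lt_of_ne <| by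
    rintro rfl
    simp_all
  rw [det2_smul_add_smul a b c y huv, hc, mul_zero, zero_add, mul_assoc]
  exact mul_pos hv (mul_self_pos.2 hy)

theorem exists_mem_segment_frontier {E : Type*} [AddCommGroup E] [Module ℝ E]
    [TopologicalSpace E] [IsTopologicalAddGroup E] [ContinuousSMul ℝ E] {s : Set E} {x y : E}
    (hx : x ∈ interior s) (hy : y ∉ interior s) : ∃ p ∈ segment ℝ x y, p ∈ frontier s := by
  by_contra! h
  refine hy <| (convex_segment x y).isPreconnected.subset_of_closure_inter_subset isOpen_interior
    ⟨x, left_mem_segment ℝ x y, hx⟩ ?_ (right_mem_segment ℝ x y)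
  rintro p ⟨hp, hps⟩
  by_contra hpi
  exact h p hps ⟨closure_mono interior_subset hp, hpi⟩

theorem affineIndependent_of_nonempty_interior_convexHull {E : Type*} [NormedAddCommGroup E]
    [NormedSpace ℝ E] [FiniteDimensional ℝ E] {n : ℕ} (hn : Module.finrank ℝ E = n)
    {p : Fin (n + 1) → E} (h : (interior (convexHull ℝ (range p))).Nonempty) :
    AffineIndependent ℝ p := by
  rw [affineIndependent_iff_le_finrank_vectorSpan ℝ p (Fintype.card_fin _), ← direction_affineSpan,
    interior_convexHull_nonempty_iff_affineSpan_eq_top.1 h, AffineSubspace.direction_top,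
    finrank_top, hn]

namespace AffineBasis

theorem frontier_convexHull_subset_union_segment {E : Type*} [NormedAddCommGroup E]
    [NormedSpace ℝ E] (b : AffineBasis (Fin 3) ℝ E) :
    frontier (convexHull ℝ (range b)) ⊆
      segment ℝ (b 1) (b 2) ∪ segment ℝ (b 2) (b 0) ∪ segment ℝ (b 0) (b 1) := by
  intro x hx
  rw [((finite_range b).isClosed_convexHull ℝ).frontier_eq, b.interior_convexHull,
    b.convexHull_eq_nonneg_coord] at hx
  obtain ⟨hnonneg, hnotpos⟩ := hx
  simp only [mem_ofPred_eq, not_forall, not_lt] at hnotpos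
  obtain ⟨i, hi⟩ := hnotpos
  have hzero : b.coord i x = 0 := le_antisymm hi (hnonneg i)
  have hcomb := b.linear_combination_coord_eq_self x
  have hsum := b.sum_coord_apply_eq_one x
  rw [Fin.sum_univ_three] at hcomb hsum
  fin_cases i
  · exact .inl <| .inl ⟨_, _, hnonneg 1, hnonneg 2, by simp_all, by simp_all⟩
  · exact .inl <| .inr ⟨_, _, hnonneg 2, hnonneg 0, by simp_all; linarith, by simp_all [add_comm]⟩
  · exact .inr ⟨_, _, hnonneg 0, hnonneg 1, by simp_all, by simp_all⟩

lemma det2_mul_neg_of_mem_interior_convexHull (b : AffineBasis (Fin 3) ℝ (ℝ × ℝ))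
    {c : ℝ × ℝ} (hc : c ∈ interior (convexHull ℝ (range b))) (h₂ : det2 (b 0) c (b 2) ≠ 0) :
    det2 (b 0) c (b 1) * det2 (b 0) c (b 2) < 0 := by
  rw [b.interior_convexHull] at hc
  have hcomb := b.linear_combination_coord_eq_self c
  have hsum := b.sum_coord_apply_eq_one c
  rw [Fin.sum_univ_three] at hcomb hsum
  have hzero := det2_smul_add_smul_add_smul (b 0) c (b 0) (b 1) (b 2) hsum
  rw [hcomb, det2_self_right, det2_self_left, mul_zero, zero_add] at hzero
  have hcancel : b.coord 1 c * (det2 (b 0) c (b 1) * det2 (b 0) c (b 2)) =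
      -(b.coord 2 c * (det2 (b 0) c (b 2) * det2 (b 0) c (b 2))) := by
    linear_combination -det2 (b 0) c (b 2) * hzero
  by_contra! hnonneg
  have := mul_pos (hc 2) (mul_self_pos.2 h₂)
  linarith [mul_nonneg (hc 1).le hnonneg]

end AffineBasis

theorem concave_edge_not_good (a₁ a₂ a₃ a₄ : ℝ × ℝ)
    (h₂ : a₂ ∈ interior (convexHull ℝ ({a₁, a₃, a₄} : Set (ℝ × ℝ)))) :
    ¬ ∃ q : ℝ × ℝ,
        q ∉ convexHull ℝ ({a₁, a₃, a₄} : Set (ℝ × ℝ)) ∧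
        0 < det2 a₁ a₂ q * det2 a₁ a₂ a₄ ∧
        (∀ k m : Fin 4,
          ∀ p ∈ segment ℝ q (![a₁, a₂, a₃, a₄] k) ∩
                segment ℝ (![a₁, a₂, a₃, a₄] m) (![a₁, a₂, a₃, a₄] (m+1)),
            (p = q ∨ p = ![a₁, a₂, a₃, a₄] k) ∧
            (p = ![a₁, a₂, a₃, a₄] m ∨ p = ![a₁, a₂, a₃, a₄] (m+1))) := by
  rintro ⟨q, hq, hside, hgood⟩
  have hrange : range ![a₁, a₃, a₄] = {a₁, a₃, a₄} := by
    simp only [Matrix.range_cons, Matrix.range_empty, union_empty, singleton_union]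
  rw [← hrange] at h₂ hq
  let b : AffineBasis (Fin 3) ℝ (ℝ × ℝ) :=
    ⟨![a₁, a₃, a₄], affineIndependent_of_nonempty_interior_convexHull (by simp) ⟨a₂, h₂⟩,
      interior_convexHull_nonempty_iff_affineSpan_eq_top.1 ⟨a₂, h₂⟩⟩
  obtain ⟨p, hp, hpT⟩ := exists_mem_segment_frontier h₂ (fun h ↦ hq (interior_subset h))
  have hpa₂ : p ≠ a₂ := fun h ↦ hpT.2 (h ▸ h₂)
  have hpq : p ≠ q := fun h ↦ hq (h ▸ ((finite_range _).isClosed_convexHull ℝ).frontier_subset hpT)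
  have hcross (m : Fin 4) (hm : p ∈ segment ℝ (![a₁, a₂, a₃, a₄] m) (![a₁, a₂, a₃, a₄] (m + 1))) :
      False := by
    rcases (hgood 1 m p ⟨segment_symm ℝ a₂ q ▸ hp, hm⟩).1 with h | h
    exacts [hpq h, hpa₂ h]
  rcases b.frontier_convexHull_subset_union_segment hpT with (hp₃₄ | hp₄₁) | hp₁₃
  · exact hcross 2 hp₃₄
  · exact hcross 3 hp₄₁
  · have hg₄ : det2 a₁ a₂ a₄ ≠ 0 := fun h ↦ by simp [h] at hside
    have hgq : det2 a₁ a₂ q ≠ 0 := fun h ↦ by simp [h] at hside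
    have hsep : det2 a₁ a₂ a₃ * det2 a₁ a₂ a₄ < 0 :=
      b.det2_mul_neg_of_mem_interior_convexHull h₂ hg₄
    have hp₃ : 0 ≤ det2 a₁ a₂ p * det2 a₁ a₂ a₃ :=
      det2_mul_nonneg_of_mem_segment (det2_self_left a₁ a₂) hp₁₃
    have hpq_side := det2_mul_pos_of_mem_segment (det2_self_right a₁ a₂) hgq hp hpa₂
    nlinarith [mul_nonneg hp₃ hside.le, mul_neg_of_pos_of_neg hpq_side hsep]
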